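/- arXiv:0911.1805 — 2 statements merged into one kernel-verified Lean document; each statement's English description precedes it below -/
import Mathlib

section
/- Let E be a finite-dimensional real inner product space, f : E → ℝ a smooth Morse function (all critical points nondegenerate), and suppose hypothesis (H1) holds: for every pair a ≤ b of reals, the set G_a^b of finite-energy gradient flow lines x with a ≤ f(x(s)) ≤ b for all s is compact in the topology of C^∞ convergence on compact subsets of ℝ. Then every finite-energy gradient flow line x converges asymptotically to critical points: there exist critical points x⁻ and x⁺ of f such that x(s) → x⁺ as s → +∞ and x(s) → x⁻ as s → −∞. -/
open Filter

variable {E : Type} [NormedAddCommGroup E] [InnerProductSpace ℝ E]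

/-- A (negative-)gradient flow line of `f`: a smooth curve `x : ℝ → E` solving
`x'(s) = ∇f(x(s))` for all `s`. -/
def IsGradFlowLine [CompleteSpace E] (f : E → ℝ) (x : ℝ → E) : Prop :=
  ContDiff ℝ (⊤ : ℕ∞) x ∧ ∀ s : ℝ, deriv x s = gradient f (x s)

/-- A curve has finite energy if `∫ ‖x'(s)‖² ds < ∞`, i.e. `‖x'‖²` is integrable. -/
def FiniteEnergy (x : ℝ → E) : Prop :=
  MeasureTheory.Integrable (fun s : ℝ => ‖deriv x s‖ ^ 2)

/-- Convergence in the topology of `C^∞` convergence on compact subsets of `ℝ`: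
all iterated derivatives converge locally uniformly. -/
def CInfLocTendsto (u : ℕ → ℝ → E) (y : ℝ → E) : Prop :=
  ∀ n : ℕ, TendstoLocallyUniformly (fun j => iteratedDeriv n (u j)) (iteratedDeriv n y) atTop

section Aux

open MeasureTheory

variable [CompleteSpace E]

lemma fderiv_apply_eq_inner' (f : E → ℝ) (p v : E) :
    fderiv ℝ f p v = inner ℝ (gradient f p) v := by
  simp [gradient, ← InnerProductSpace.toDual_apply_apply]

lemma gradient_eq_zero_iff' (f : E → ℝ) (p : E) :
    gradient f p = 0 ↔ fderiv ℝ f p = 0 := by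
  simp [gradient]

lemma hasDerivAt_comp_flow (f : E → ℝ) (hf : ContDiff ℝ (⊤ : ℕ∞) f) {x : ℝ → E}
    (hx : IsGradFlowLine f x) (s : ℝ) :
    HasDerivAt (fun t => f (x t)) (‖deriv x s‖ ^ 2) s := by
  have hdx : HasDerivAt x (deriv x s) s := ((hx.1.differentiable (by simp)) s).hasDerivAt
  have hdf : HasFDerivAt f (fderiv ℝ f (x s)) (x s) :=
    ((hf.differentiable (by simp)) (x s)).hasFDerivAt
  have h := hdf.comp_hasDerivAt s hdx
  have he : fderiv ℝ f (x s) (deriv x s) = ‖deriv x s‖ ^ 2 := by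
    rw [fderiv_apply_eq_inner', ← hx.2 s, real_inner_self_eq_norm_sq]
  rwa [he] at h

lemma shift_flow (f : E → ℝ) {x : ℝ → E} (hx : IsGradFlowLine f x) (hE : FiniteEnergy x)
    (r : ℝ) : IsGradFlowLine f (fun s => x (s + r)) ∧ FiniteEnergy (fun s => x (s + r)) := by
  have hd : ∀ s : ℝ, deriv (fun t => x (t + r)) s = deriv x (s + r) := fun s =>
    deriv_comp_add_const x r s
  refine ⟨⟨hx.1.comp (contDiff_id.add contDiff_const), fun s => by rw [hd s, hx.2 (s + r)]⟩, ?_⟩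
  unfold FiniteEnergy
  simp_rw [hd]
  exact ((measurePreserving_add_right volume r).integrable_comp_emb
    (MeasurableEquiv.addRight r).measurableEmbedding).mpr hE

lemma fx_bounds (f : E → ℝ) (hf : ContDiff ℝ (⊤ : ℕ∞) f) {x : ℝ → E}
    (hx : IsGradFlowLine f x) (hE : FiniteEnergy x) :
    ∀ t : ℝ, f (x t) ∈ Set.Icc (f (x 0) - ∫ s : ℝ, ‖deriv x s‖ ^ 2)
      (f (x 0) + ∫ s : ℝ, ‖deriv x s‖ ^ 2) := by
  have hcont : Continuous (fun s : ℝ => ‖deriv x s‖ ^ 2) :=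
    ((hx.1.continuous_deriv (by simp)).norm.pow 2)
  have hftc : ∀ t : ℝ, f (x t) - f (x 0) = ∫ s in (0:ℝ)..t, ‖deriv x s‖ ^ 2 := by
    intro t
    rw [intervalIntegral.integral_eq_sub_of_hasDerivAt
      (fun s _ => hasDerivAt_comp_flow f hf hx s) (hcont.intervalIntegrable 0 t)]
  have key : ∀ u v : ℝ, u ≤ v → (0:ℝ) ≤ (∫ s in u..v, ‖deriv x s‖ ^ 2) ∧
      (∫ s in u..v, ‖deriv x s‖ ^ 2) ≤ ∫ s : ℝ, ‖deriv x s‖ ^ 2 := by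
    intro u v huv
    constructor
    · exact intervalIntegral.integral_nonneg huv (fun s _ => by positivity)
    · rw [intervalIntegral.integral_of_le huv]
      exact setIntegral_le_integral hE (Eventually.of_forall fun s => by positivity)
  intro t
  rcases le_total 0 t with ht | ht
  · have h1 := key 0 t ht
    have h2 := hftc t
    exact ⟨by linarith, by linarith⟩
  · have h1 := key t 0 ht
    have h2 := hftc t
    rw [intervalIntegral.integral_symm] at h2
    exact ⟨by linarith, by linarith⟩

lemma limitpoint [FiniteDimensional ℝ E] (f : E → ℝ) (hf : ContDiff ℝ (⊤ : ℕ∞) f)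
    (hH1 : ∀ a b : ℝ, a ≤ b → ∀ u : ℕ → ℝ → E,
      (∀ j, IsGradFlowLine f (u j) ∧ FiniteEnergy (u j) ∧
        ∀ s : ℝ, f (u j s) ∈ Set.Icc a b) →
      ∃ (φ : ℕ → ℕ) (y : ℝ → E), StrictMono φ ∧
        IsGradFlowLine f y ∧ FiniteEnergy y ∧ (∀ s : ℝ, f (y s) ∈ Set.Icc a b) ∧
        CInfLocTendsto (fun j => u (φ j)) y)
    (x : ℝ → E) (hx : IsGradFlowLine f x) (hE : FiniteEnergy x)
    (a b : ℝ) (hab : ∀ s : ℝ, f (x s) ∈ Set.Icc a b)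
    (l : Filter ℝ) (c : ℝ) (hfx : Tendsto (fun t => f (x t)) l (nhds c))
    (r : ℕ → ℝ) (hr : ∀ s : ℝ, Tendsto (fun j => s + r j) atTop l) :
    ∃ (φ : ℕ → ℕ) (p : E), StrictMono φ ∧ gradient f p = 0 ∧
      Tendsto (fun j => x (r (φ j))) atTop (nhds p) := by
  have hab' : a ≤ b := le_trans (hab 0).1 (hab 0).2
  obtain ⟨φ, y, hφ, hy, hyE, hyab, hconv⟩ := hH1 a b hab' (fun j s => x (s + r j)) (fun j =>
    ⟨(shift_flow f hx hE (r j)).1, (shift_flow f hx hE (r j)).2, fun s => hab (s + r j)⟩)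
  have h0 := hconv 0
  simp only [iteratedDeriv_zero] at h0
  have hpt : ∀ s : ℝ, Tendsto (fun j => x (s + r (φ j))) atTop (nhds (y s)) := fun s =>
    (tendstoLocallyUniformlyOn_univ.mpr h0).tendsto_at (Set.mem_univ s)
  have hyc : ∀ s : ℝ, f (y s) = c := fun s =>
    tendsto_nhds_unique ((hf.continuous.tendsto (y s)).comp (hpt s))
      (hfx.comp ((hr s).comp hφ.tendsto_atTop))
  have hder : ∀ s : ℝ, gradient f (y s) = 0 := by
    intro s
    have h1 : HasDerivAt (fun t => f (y t)) (‖deriv y s‖ ^ 2) s := hasDerivAt_comp_flow f hf hy s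
    have h2 : (fun t => f (y t)) = fun _ => c := funext hyc
    rw [h2] at h1
    have h3 : ‖deriv y s‖ ^ 2 = 0 := by
      have := h1.deriv
      simp at this
      linarith
    have hd0 : deriv y s = 0 := by
      have := pow_eq_zero_iff (n := 2) (by norm_num) |>.mp h3
      simpa using this
    rw [← hy.2 s, hd0]
  exact ⟨φ, y 0, hφ, hder 0, by simpa using hpt 0⟩

lemma crit_isolated [FiniteDimensional ℝ E] (f : E → ℝ) (hf : ContDiff ℝ (⊤ : ℕ∞) f)
    (hMorse : ∀ p : E, fderiv ℝ f p = 0 →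
      ∀ v : E, (∀ w : E, fderiv ℝ (fderiv ℝ f) p v w = 0) → v = 0)
    (p : E) (hp : fderiv ℝ f p = 0) :
    ∃ ε > 0, ∀ q : E, dist q p ≤ ε → gradient f q = 0 → q = p := by
  have hg : ContDiff ℝ (⊤ : ℕ∞) (fderiv ℝ f) := hf.fderiv_right (by simp)
  set A : E →L[ℝ] (E →L[ℝ] ℝ) := fderiv ℝ (fderiv ℝ f) p with hA
  have hstrict : HasStrictFDerivAt (fderiv ℝ f) A p := hg.contDiffAt.hasStrictFDerivAt (by simp)
  have hinj : Function.Injective A := by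
    intro v w hvw
    have h2 : ∀ u, A (v - w) u = 0 := by
      intro u; rw [map_sub]; rw [hvw]; simp
    exact sub_eq_zero.1 (hMorse p hp (v - w) h2)
  have hrank : Module.finrank ℝ E = Module.finrank ℝ (E →L[ℝ] ℝ) :=
    (InnerProductSpace.toDual ℝ E).toLinearEquiv.finrank_eq
  let eL : E ≃L[ℝ] (E →L[ℝ] ℝ) :=
    (LinearMap.linearEquivOfInjective (A : E →ₗ[ℝ] (E →L[ℝ] ℝ)) hinj hrank).toContinuousLinearEquiv
  have hcoe : (eL : E →L[ℝ] (E →L[ℝ] ℝ)) = A := by ext v; rfl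
  rw [← hcoe] at hstrict
  have hev := hstrict.eventually_left_inverse
  obtain ⟨ε, hε, hball⟩ := Metric.eventually_nhds_iff_ball.mp hev
  refine ⟨ε/2, by positivity, fun q hq hq0 => ?_⟩
  have h1 := hball q (by rw [Metric.mem_ball]; have := dist_nonneg (x := q) (y := p); linarith)
  have h2 := hball p (Metric.mem_ball_self hε)
  rw [(gradient_eq_zero_iff' f q).1 hq0, ← hp] at h1
  rw [h1] at h2
  exact h2

lemma converge_top [FiniteDimensional ℝ E] (f : E → ℝ) (hf : ContDiff ℝ (⊤ : ℕ∞) f)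
    (hMorse : ∀ p : E, fderiv ℝ f p = 0 →
      ∀ v : E, (∀ w : E, fderiv ℝ (fderiv ℝ f) p v w = 0) → v = 0)
    (hH1 : ∀ a b : ℝ, a ≤ b → ∀ u : ℕ → ℝ → E,
      (∀ j, IsGradFlowLine f (u j) ∧ FiniteEnergy (u j) ∧
        ∀ s : ℝ, f (u j s) ∈ Set.Icc a b) →
      ∃ (φ : ℕ → ℕ) (y : ℝ → E), StrictMono φ ∧
        IsGradFlowLine f y ∧ FiniteEnergy y ∧ (∀ s : ℝ, f (y s) ∈ Set.Icc a b) ∧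
        CInfLocTendsto (fun j => u (φ j)) y)
    (x : ℝ → E) (hx : IsGradFlowLine f x) (hE : FiniteEnergy x)
    (a b : ℝ) (hab : ∀ s : ℝ, f (x s) ∈ Set.Icc a b)
    (c : ℝ) (hfx : Tendsto (fun t => f (x t)) atTop (nhds c)) :
    ∃ p : E, gradient f p = 0 ∧ Tendsto x atTop (nhds p) := by
  obtain ⟨φ, p, hφ, hp, hxp⟩ := limitpoint f hf hH1 x hx hE a b hab atTop c hfx
    (fun j => (j : ℝ)) (fun s => tendsto_atTop_add_const_left _ s tendsto_natCast_atTop_atTop)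
  refine ⟨p, hp, ?_⟩
  by_contra hnot
  obtain ⟨ε0, hε0, hiso⟩ := crit_isolated f hf hMorse p ((gradient_eq_zero_iff' f p).1 hp)
  rw [Metric.tendsto_nhds] at hnot
  push_neg at hnot
  obtain ⟨ε, hε, hbad'⟩ := hnot
  have hbad : ∀ N : ℝ, ∃ t ≥ N, ε ≤ dist (x t) p := by
    intro N
    obtain ⟨t, ht, htd⟩ := (frequently_atTop.mp hbad') N
    exact ⟨t, ht, htd⟩
  set δ := min ε ε0 with hδdef
  have hδ : 0 < δ := lt_min hε hε0
  obtain ⟨J, hJ⟩ := Metric.tendsto_atTop.mp hxp (δ/2) (by positivity)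
  have hcross : ∀ j : ℕ, ∃ s : ℝ, ((φ (J + j) : ℕ) : ℝ) ≤ s ∧ dist (x s) p = δ/2 := by
    intro j
    have hgj : dist (x ((φ (J + j) : ℕ) : ℝ)) p < δ/2 := hJ (J + j) (Nat.le_add_right J j)
    obtain ⟨t, ht, htd⟩ := hbad ((φ (J + j) : ℕ) : ℝ)
    have hcont : ContinuousOn (fun u : ℝ => dist (x u) p)
        (Set.Icc ((φ (J + j) : ℕ) : ℝ) t) :=
      (hx.1.continuous.dist continuous_const).continuousOn
    have hmem : δ/2 ∈ Set.Icc (dist (x ((φ (J + j) : ℕ) : ℝ)) p) (dist (x t) p) :=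
      ⟨le_of_lt hgj, by
        have h1 : δ ≤ ε := min_le_left _ _
        linarith⟩
    obtain ⟨s, hs, hsd⟩ := intermediate_value_Icc ht hcont hmem
    exact ⟨s, hs.1, hsd⟩
  choose sq hsq1 hsq2 using hcross
  have hsq_top : Tendsto sq atTop atTop := by
    refine tendsto_atTop_mono hsq1 ?_
    exact tendsto_natCast_atTop_atTop.comp
      (hφ.tendsto_atTop.comp (tendsto_atTop_mono (fun j => Nat.le_add_left j J) tendsto_id))
  obtain ⟨ψ, q, hψ, hq, hxq⟩ := limitpoint f hf hH1 x hx hE a b hab atTop c hfx sq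
    (fun s => tendsto_atTop_add_const_left _ s hsq_top)
  have hdq : dist q p = δ/2 := by
    have h1 : Tendsto (fun j => dist (x (sq (ψ j))) p) atTop (nhds (dist q p)) :=
      hxq.dist tendsto_const_nhds
    have h2 : (fun j => dist (x (sq (ψ j))) p) = fun _ => δ/2 := funext fun j => hsq2 (ψ j)
    rw [h2] at h1
    exact (tendsto_nhds_unique h1 tendsto_const_nhds)
  have hqp : q = p := hiso q (by rw [hdq]; have := min_le_right ε ε0; linarith) hq
  rw [hqp, dist_self] at hdq
  linarith

lemma converge_bot [FiniteDimensional ℝ E] (f : E → ℝ) (hf : ContDiff ℝ (⊤ : ℕ∞) f)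
    (hMorse : ∀ p : E, fderiv ℝ f p = 0 →
      ∀ v : E, (∀ w : E, fderiv ℝ (fderiv ℝ f) p v w = 0) → v = 0)
    (hH1 : ∀ a b : ℝ, a ≤ b → ∀ u : ℕ → ℝ → E,
      (∀ j, IsGradFlowLine f (u j) ∧ FiniteEnergy (u j) ∧
        ∀ s : ℝ, f (u j s) ∈ Set.Icc a b) →
      ∃ (φ : ℕ → ℕ) (y : ℝ → E), StrictMono φ ∧
        IsGradFlowLine f y ∧ FiniteEnergy y ∧ (∀ s : ℝ, f (y s) ∈ Set.Icc a b) ∧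
        CInfLocTendsto (fun j => u (φ j)) y)
    (x : ℝ → E) (hx : IsGradFlowLine f x) (hE : FiniteEnergy x)
    (a b : ℝ) (hab : ∀ s : ℝ, f (x s) ∈ Set.Icc a b)
    (c : ℝ) (hfx : Tendsto (fun t => f (x t)) atBot (nhds c)) :
    ∃ p : E, gradient f p = 0 ∧ Tendsto x atBot (nhds p) := by
  have hneg : Tendsto (fun j : ℕ => -(j : ℝ)) atTop atBot :=
    tendsto_neg_atTop_atBot.comp tendsto_natCast_atTop_atTop
  obtain ⟨φ, p, hφ, hp, hxp⟩ := limitpoint f hf hH1 x hx hE a b hab atBot c hfx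
    (fun j => -(j : ℝ)) (fun s => tendsto_atBot_add_const_left _ s hneg)
  refine ⟨p, hp, ?_⟩
  by_contra hnot
  obtain ⟨ε0, hε0, hiso⟩ := crit_isolated f hf hMorse p ((gradient_eq_zero_iff' f p).1 hp)
  rw [Metric.tendsto_nhds] at hnot
  push_neg at hnot
  obtain ⟨ε, hε, hbad'⟩ := hnot
  have hbad : ∀ N : ℝ, ∃ t ≤ N, ε ≤ dist (x t) p := by
    intro N
    obtain ⟨t, ht, htd⟩ := (frequently_atBot.mp hbad') N
    exact ⟨t, ht, htd⟩
  set δ := min ε ε0 with hδdef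
  have hδ : 0 < δ := lt_min hε hε0
  obtain ⟨J, hJ⟩ := Metric.tendsto_atTop.mp hxp (δ/2) (by positivity)
  have hcross : ∀ j : ℕ, ∃ s : ℝ, s ≤ -((φ (J + j) : ℕ) : ℝ) ∧ dist (x s) p = δ/2 := by
    intro j
    have hgj : dist (x (-((φ (J + j) : ℕ) : ℝ))) p < δ/2 := hJ (J + j) (Nat.le_add_right J j)
    obtain ⟨t, ht, htd⟩ := hbad (-((φ (J + j) : ℕ) : ℝ))
    have hcont : ContinuousOn (fun u : ℝ => dist (x u) p)
        (Set.Icc t (-((φ (J + j) : ℕ) : ℝ))) :=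
      (hx.1.continuous.dist continuous_const).continuousOn
    have hmem : δ/2 ∈ Set.Icc (dist (x (-((φ (J + j) : ℕ) : ℝ))) p) (dist (x t) p) :=
      ⟨le_of_lt hgj, by
        have h1 : δ ≤ ε := min_le_left _ _
        linarith⟩
    obtain ⟨s, hs, hsd⟩ := intermediate_value_Icc' ht hcont hmem
    exact ⟨s, hs.2, hsd⟩
  choose sq hsq1 hsq2 using hcross
  have hsq_bot : Tendsto sq atTop atBot := by
    refine tendsto_atBot_mono hsq1 ?_
    exact hneg.comp (hφ.tendsto_atTop.comp (tendsto_atTop_mono (fun j => Nat.le_add_left j J) tendsto_id))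
  obtain ⟨ψ, q, hψ, hq, hxq⟩ := limitpoint f hf hH1 x hx hE a b hab atBot c hfx sq
    (fun s => tendsto_atBot_add_const_left _ s hsq_bot)
  have hdq : dist q p = δ/2 := by
    have h1 : Tendsto (fun j => dist (x (sq (ψ j))) p) atTop (nhds (dist q p)) :=
      hxq.dist tendsto_const_nhds
    have h2 : (fun j => dist (x (sq (ψ j))) p) = fun _ => δ/2 := funext fun j => hsq2 (ψ j)
    rw [h2] at h1
    exact (tendsto_nhds_unique h1 tendsto_const_nhds)
  have hqp : q = p := hiso q (by rw [hdq]; have := min_le_right ε ε0; linarith) hq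
  rw [hqp, dist_self] at hdq
  linarith

end Aux

/-- Let `E` be a finite-dimensional real inner product space and `f` a smooth
Morse function on `E`. Assume hypothesis (H1): for every action window `[a,b]`, the set
`G_a^b` of finite-energy gradient flow lines staying in the window is (sequentially) compact
in the `C^∞_loc` topology. Then every finite-energy gradient flow line converges
asymptotically to critical points of `f`. -/
theorem stmt0 [FiniteDimensional ℝ E]
    (f : E → ℝ) (hf : ContDiff ℝ (⊤ : ℕ∞) f)
    (hMorse : ∀ p : E, fderiv ℝ f p = 0 →
      ∀ v : E, (∀ w : E, fderiv ℝ (fderiv ℝ f) p v w = 0) → v = 0)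
    (hH1 : ∀ a b : ℝ, a ≤ b → ∀ u : ℕ → ℝ → E,
      (∀ j, IsGradFlowLine f (u j) ∧ FiniteEnergy (u j) ∧
        ∀ s : ℝ, f (u j s) ∈ Set.Icc a b) →
      ∃ (φ : ℕ → ℕ) (y : ℝ → E), StrictMono φ ∧
        IsGradFlowLine f y ∧ FiniteEnergy y ∧ (∀ s : ℝ, f (y s) ∈ Set.Icc a b) ∧
        CInfLocTendsto (fun j => u (φ j)) y)
    (x : ℝ → E) (hx : IsGradFlowLine f x) (hE : FiniteEnergy x) :
    ∃ xm xp : E, gradient f xm = 0 ∧ gradient f xp = 0 ∧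
      Tendsto x atBot (nhds xm) ∧ Tendsto x atTop (nhds xp) := by
  have hcomplete : CompleteSpace E := FiniteDimensional.complete ℝ E
  have hab := fx_bounds f hf hx hE
  have hmono : Monotone (fun t => f (x t)) := by
    refine monotone_of_deriv_nonneg (fun t => (hasDerivAt_comp_flow f hf hx t).differentiableAt)
      (fun t => ?_)
    rw [(hasDerivAt_comp_flow f hf hx t).deriv]
    positivity
  have hbddA : BddAbove (Set.range fun t => f (x t)) := by
    refine ⟨f (x 0) + ∫ s : ℝ, ‖deriv x s‖ ^ 2, ?_⟩
    rintro v ⟨t, rfl⟩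
    exact (hab t).2
  have hbddB : BddBelow (Set.range fun t => f (x t)) := by
    refine ⟨f (x 0) - ∫ s : ℝ, ‖deriv x s‖ ^ 2, ?_⟩
    rintro v ⟨t, rfl⟩
    exact (hab t).1
  have htop : Tendsto (fun t => f (x t)) atTop (nhds (⨆ t, f (x t))) :=
    tendsto_atTop_ciSup hmono hbddA
  have hbot : Tendsto (fun t => f (x t)) atBot (nhds (⨅ t, f (x t))) :=
    tendsto_atBot_ciInf hmono hbddB
  obtain ⟨xp, hxp1, hxp2⟩ := converge_top f hf hMorse hH1 x hx hE _ _ hab _ htop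
  obtain ⟨xm, hxm1, hxm2⟩ := converge_bot f hf hMorse hH1 x hx hE _ _ hab _ hbot
  exact ⟨xm, xp, hxm1, hxp1, hxm2, hxp2⟩
end

section
/- Let (a_j)_{j≥1} be a sequence of integers and set S_k = Σ_{j=1}^{k} 2^{j−1} a_j. Assume that S_k → ∞ as k → ∞ and that 0 < S_k / 2^k < 3/4 for every k ≥ 1. Then there is no sequence of integers (b_j)_{j≥0} satisfying a_j = −2 b_j + b_{j−1} for all j ≥ 1. (Moreover such sequences (a_j) exist, e.g. consisting only of zeroes and ones.) -/
open Filter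

/-!
A solution `b` would make `S_k - b_0 = -2^k b_k` a multiple of `2^k`. Since `S_k → ∞` it is
eventually positive, hence at least `2^k`, and then `S_k / 2^k ≥ 1 + b_0 / 2^k ≥ 3/4` once
`2^k ≥ -4 b_0`. An example is `a_j = j mod 2`, for which `3 S_k + 1 = 2^(k + k mod 2)`.
-/

def binaryPartialSum {R : Type*} [CommRing R] (a : ℕ → R) (k : ℕ) : R :=
  ∑ j ∈ Finset.Icc 1 k, 2 ^ (j - 1) * a j

section CommRing

variable {R : Type*} [CommRing R]

@[simp]
lemma binaryPartialSum_zero (a : ℕ → R) : binaryPartialSum a 0 = 0 := by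
  simp [binaryPartialSum]

lemma binaryPartialSum_succ (a : ℕ → R) (k : ℕ) :
    binaryPartialSum a (k + 1) = binaryPartialSum a k + 2 ^ k * a (k + 1) := by
  rw [binaryPartialSum, Finset.sum_Icc_succ_top (by omega), Nat.add_sub_cancel]
  rfl

lemma binaryPartialSum_eq_of_recurrence {a b : ℕ → R}
    (hab : ∀ j, 1 ≤ j → a j = -2 * b j + b (j - 1)) (k : ℕ) :
    binaryPartialSum a k = b 0 - 2 ^ k * b k := by
  induction k with
  | zero => simp
  | succ k ih =>
    rw [binaryPartialSum_succ, ih, hab (k + 1) (by omega), Nat.add_sub_cancel]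
    ring

end CommRing

lemma cast_div_two_pow_mem_Ioo_iff (S : ℤ) (k : ℕ) :
    (0 < (S : ℚ) / 2 ^ k ∧ (S : ℚ) / 2 ^ k < 3 / 4) ↔ 0 < S ∧ 4 * S < 3 * 2 ^ k := by
  rw [div_pos_iff_of_pos_right (by positivity), div_lt_div_iff₀ (by positivity) (by norm_num)]
  norm_cast
  rw [mul_comm S]

lemma eventually_three_mul_two_pow_le_of_recurrence {a b : ℕ → ℤ}
    (hab : ∀ j, 1 ≤ j → a j = -2 * b j + b (j - 1))
    (htend : Tendsto (binaryPartialSum a) atTop atTop) :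
    ∀ᶠ k in atTop, 3 * 2 ^ k ≤ 4 * binaryPartialSum a k := by
  have hpow : Tendsto (fun k : ℕ => (2 : ℤ) ^ k) atTop atTop :=
    tendsto_pow_atTop_atTop_of_one_lt one_lt_two
  filter_upwards [htend.eventually_gt_atTop (b 0), hpow.eventually_ge_atTop (-4 * b 0)]
    with k hS hk
  rw [binaryPartialSum_eq_of_recurrence hab] at hS ⊢
  have hbk : b k ≤ -1 := by
    by_contra! h
    nlinarith [pow_pos (two_pos : (0 : ℤ) < 2) k]
  nlinarith

def alternatingBits (j : ℕ) : ℤ := (j % 2 : ℕ)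

lemma alternatingBits_eq_zero_or_one (j : ℕ) : alternatingBits j = 0 ∨ alternatingBits j = 1 := by
  rcases Nat.mod_two_eq_zero_or_one j with h | h <;> simp [alternatingBits, h]

lemma one_add_three_mul_binaryPartialSum_alternatingBits (k : ℕ) :
    1 + 3 * binaryPartialSum alternatingBits k = 2 ^ (k + k % 2) := by
  induction k with
  | zero => simp
  | succ k ih =>
    rw [binaryPartialSum_succ, mul_add, ← add_assoc, ih, alternatingBits]
    rcases Nat.mod_two_eq_zero_or_one k with h | h
    · rw [show (k + 1) % 2 = 1 by omega, h, pow_succ, add_zero]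
      push_cast; ring
    · rw [show (k + 1) % 2 = 0 by omega, h, pow_succ]
      push_cast; ring

lemma tendsto_binaryPartialSum_alternatingBits :
    Tendsto (binaryPartialSum alternatingBits) atTop atTop := by
  refine (Tendsto.atTop_of_const_add 1 ?_).atTop_of_const_mul₀ three_pos
  refine tendsto_atTop_mono (fun k => ?_) (tendsto_pow_atTop_atTop_of_one_lt one_lt_two)
  rw [one_add_three_mul_binaryPartialSum_alternatingBits]
  exact pow_le_pow_right₀ one_le_two (Nat.le_add_right _ _)

lemma binaryPartialSum_alternatingBits_bounds {k : ℕ} (hk : 1 ≤ k) :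
    0 < binaryPartialSum alternatingBits k ∧
      4 * binaryPartialSum alternatingBits k < 3 * 2 ^ k := by
  have hS := one_add_three_mul_binaryPartialSum_alternatingBits k
  have hlow : (2 : ℤ) ^ 1 ≤ 2 ^ (k + k % 2) := pow_le_pow_right₀ one_le_two (by omega)
  have hup : (2 : ℤ) ^ (k + k % 2) ≤ 2 ^ (k + 1) := pow_le_pow_right₀ one_le_two (by omega)
  rw [pow_succ] at hup
  constructor <;> omega

/-- **Statement 17.** Let `(a_j)_{j ≥ 1}` be a sequence of integers with partial sums
`S_k = ∑_{j=1}^k 2^(j-1) a_j`. If `S_k → ∞` and `0 < S_k / 2^k < 3/4` for every `k ≥ 1`,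
then there is no sequence of integers `(b_j)_{j ≥ 0}` with `a_j = -2 b_j + b_{j-1}` for all
`j ≥ 1`. Moreover, such sequences `(a_j)` exist, consisting only of zeroes and ones. -/
theorem stmt17 :
    (∀ a : ℕ → ℤ,
      Tendsto (fun k : ℕ => ∑ j ∈ Finset.Icc 1 k, 2 ^ (j - 1) * a j) atTop atTop →
      (∀ k : ℕ, 1 ≤ k →
        0 < ((∑ j ∈ Finset.Icc 1 k, 2 ^ (j - 1) * a j : ℤ) : ℚ) / 2 ^ k ∧
        ((∑ j ∈ Finset.Icc 1 k, 2 ^ (j - 1) * a j : ℤ) : ℚ) / 2 ^ k < 3 / 4) →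
      ¬ ∃ b : ℕ → ℤ, ∀ j : ℕ, 1 ≤ j → a j = -2 * b j + b (j - 1)) ∧
    ∃ a : ℕ → ℤ, (∀ j, a j = 0 ∨ a j = 1) ∧
      Tendsto (fun k : ℕ => ∑ j ∈ Finset.Icc 1 k, 2 ^ (j - 1) * a j) atTop atTop ∧
      (∀ k : ℕ, 1 ≤ k →
        0 < ((∑ j ∈ Finset.Icc 1 k, 2 ^ (j - 1) * a j : ℤ) : ℚ) / 2 ^ k ∧
        ((∑ j ∈ Finset.Icc 1 k, 2 ^ (j - 1) * a j : ℤ) : ℚ) / 2 ^ k < 3 / 4) := by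
  refine ⟨fun a htend hbound ⟨b, hab⟩ => ?_, alternatingBits, alternatingBits_eq_zero_or_one,
    tendsto_binaryPartialSum_alternatingBits, fun k hk =>
      (cast_div_two_pow_mem_Ioo_iff _ k).2 (binaryPartialSum_alternatingBits_bounds hk)⟩
  obtain ⟨k, hle, hk⟩ :=
    ((eventually_three_mul_two_pow_le_of_recurrence hab htend).and
      (eventually_ge_atTop 1)).exists
  have hlt := ((cast_div_two_pow_mem_Ioo_iff _ k).1 (hbound k hk)).2
  exact (hle.trans_lt hlt).false
end
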